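/- For every admissible function N for Δ(E_6), there exists no function F : Δ(E_6) → ℝ^8 such that 2·⟨β, F(α)⟩ = Γ_N(β,α) + Γ_N(β,−α) for all α, β ∈ Δ(E_6). (This is the key nonexistence result behind Theorem 2.2 for the exceptional simple Lie algebra E_6; since all roots have the same length there is a single coupling constant, which cancels from the identity.) -/

import Mathlib

/-! When all roots have squared length 2, `β + α` can be a root only if `⟪β, α⟫ = -1`.
So for fixed `α` the right-hand side `Γ β α + Γ β (-α)` vanishes at every root `β` with
`⟪β, α⟫ ≠ ±1`, and since the left-hand side is linear in `β`, it vanishes on the span of these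
roots. For `E_6` take `α = e₂ + e₃` and `β = e₁ - e₃`: then `β` lies in the span of `e₁ ± e₄`
and `e₂ ± e₃`, which are orthogonal or equal to `α`, while `β + α = e₁ + e₂` is a root, so the
right-hand side at `β` is `N β α ≠ 0`. -/

open scoped RealInnerProductSpace

/-- The standard basis vector `e_k` of `ℝ^8` (0-based indexing: `eVec8 k` is `e_{k+1}`). -/
noncomputable def eVec8 (k : Fin 8) : EuclideanSpace ℝ (Fin 8) :=
  EuclideanSpace.single k 1

/-- The root system of type `E_6` in `ℝ^8`, consisting of `±(e_k − e_l)`, `±(e_k + e_l)`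
for `1 ≤ k < l ≤ 5`, and of `±(1/2)(e_8 − e_7 − e_6 + Σ_{k=1}^{5} ε_k e_k)` with signs
`ε_k = ±1` whose product is `+1` (i.e. an even number of minus signs). -/
def DeltaE6 : Set (EuclideanSpace ℝ (Fin 8)) :=
  {v | (∃ k l : Fin 8, (k : ℕ) < (l : ℕ) ∧ (l : ℕ) ≤ 4 ∧ ∃ s : ℝ, (s = 1 ∨ s = -1) ∧
          (v = s • (eVec8 k - eVec8 l) ∨ v = s • (eVec8 k + eVec8 l))) ∨
       (∃ s : ℝ, (s = 1 ∨ s = -1) ∧ ∃ ε : Fin 5 → ℝ, (∀ k, ε k = 1 ∨ ε k = -1) ∧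
          (∏ k, ε k) = 1 ∧
          v = s • ((1/2 : ℝ) • (eVec8 7 - eVec8 6 - eVec8 5 +
                ∑ k : Fin 5, ε k • eVec8 (Fin.castLE (by norm_num) k))))}

section RootCoupling

variable {V : Type*} [NormedAddCommGroup V] [InnerProductSpace ℝ V] {Δ : Set V}

lemma inner_eq_neg_one_of_inner_add_self {α β : V} (hα : ⟪α, α⟫ = 2) (hβ : ⟪β, β⟫ = 2)
    (h : ⟪β + α, β + α⟫ = 2) : ⟪β, α⟫ = -1 := by
  rw [real_inner_add_add_self, hα, hβ] at h
  linarith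

lemma add_notMem_of_inner_ne_neg_one (hΔ : ∀ v ∈ Δ, ⟪v, v⟫ = 2) {α β : V} (hα : ⟪α, α⟫ = 2)
    (hβ : β ∈ Δ) (h : ⟪β, α⟫ ≠ -1) : β + α ∉ Δ :=
  fun hβα => h (inner_eq_neg_one_of_inner_add_self hα (hΔ β hβ) (hΔ _ hβα))

lemma add_neg_notMem_of_inner_ne_one (hΔ : ∀ v ∈ Δ, ⟪v, v⟫ = 2) {α β : V} (hα : ⟪α, α⟫ = 2)
    (hβ : β ∈ Δ) (h : ⟪β, α⟫ ≠ 1) : β + -α ∉ Δ :=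
  add_notMem_of_inner_ne_neg_one hΔ (by rwa [inner_neg_neg]) hβ
    (by rwa [inner_neg_right, ne_eq, neg_inj])

lemma inner_eq_zero_of_mem_span (hΔ : ∀ v ∈ Δ, ⟪v, v⟫ = 2) {Γ : V → V → ℝ}
    (hΓ : ∀ β α, β + α ∉ Δ → Γ β α = 0) {α w : V} (hα : α ∈ Δ)
    (hw : ∀ β ∈ Δ, 2 * ⟪β, w⟫ = Γ β α + Γ β (-α)) {β : V}
    (hβ : β ∈ Submodule.span ℝ {γ ∈ Δ | ⟪γ, α⟫ ≠ 1 ∧ ⟪γ, α⟫ ≠ -1}) : ⟪β, w⟫ = 0 := by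
  suffices Submodule.span ℝ {γ ∈ Δ | ⟪γ, α⟫ ≠ 1 ∧ ⟪γ, α⟫ ≠ -1} ≤ LinearMap.ker (innerₛₗ ℝ w) by
    rw [real_inner_comm]
    exact this hβ
  rw [Submodule.span_le]
  rintro γ ⟨hγ, hγα, hγα'⟩
  have hw := hw γ hγ
  rw [hΓ _ _ (add_notMem_of_inner_ne_neg_one hΔ (hΔ α hα) hγ hγα'),
    hΓ _ _ (add_neg_notMem_of_inner_ne_one hΔ (hΔ α hα) hγ hγα), real_inner_comm] at hw
  simpa using hw

theorem not_exists_two_mul_inner_eq_of_mem_span (hΔ : ∀ v ∈ Δ, ⟪v, v⟫ = 2) (N : V → V → ℝ)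
    (hN : ∀ α ∈ Δ, ∀ β ∈ Δ, (N β α ≠ 0 ↔ β + α ∈ Δ)) (Γ : V → V → ℝ)
    (hΓ : ∀ β α : V, (β + α ∈ Δ → Γ β α = N β α) ∧ (β + α ∉ Δ → Γ β α = 0)) {α β : V}
    (hα : α ∈ Δ) (hβ : β ∈ Δ) (hβα : β + α ∈ Δ)
    (hspan : β ∈ Submodule.span ℝ {γ ∈ Δ | ⟪γ, α⟫ ≠ 1 ∧ ⟪γ, α⟫ ≠ -1}) :
    ¬ ∃ F : V → V, ∀ α ∈ Δ, ∀ β ∈ Δ, 2 * ⟪β, F α⟫ = Γ β α + Γ β (-α) := by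
  rintro ⟨F, hF⟩
  have hβw : ⟪β, F α⟫ = 0 :=
    inner_eq_zero_of_mem_span hΔ (fun β α => (hΓ β α).2) hα (hF α hα) hspan
  have hβα' : ⟪β, α⟫ = -1 :=
    inner_eq_neg_one_of_inner_add_self (hΔ α hα) (hΔ β hβ) (hΔ _ hβα)
  have hβα'' : β + -α ∉ Δ :=
    add_neg_notMem_of_inner_ne_one hΔ (hΔ α hα) hβ (by rw [hβα']; norm_num)
  have hF := hF α hα β hβ
  rw [hβw, (hΓ β α).1 hβα, (hΓ β (-α)).2 hβα''] at hF
  exact (hN α hα β hβ).2 hβα (by linarith)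

end RootCoupling

lemma inner_eVec8 (i j : Fin 8) : ⟪eVec8 i, eVec8 j⟫ = if i = j then 1 else 0 :=
  orthonormal_iff_ite.mp EuclideanSpace.orthonormal_single i j

lemma eVec8_sub_mem_DeltaE6 {k l : Fin 8} (hkl : (k : ℕ) < l) (hl : (l : ℕ) ≤ 4) :
    eVec8 k - eVec8 l ∈ DeltaE6 :=
  Or.inl ⟨k, l, hkl, hl, 1, Or.inl rfl, Or.inl (one_smul ℝ _).symm⟩

lemma eVec8_add_mem_DeltaE6 {k l : Fin 8} (hkl : (k : ℕ) < l) (hl : (l : ℕ) ≤ 4) :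
    eVec8 k + eVec8 l ∈ DeltaE6 :=
  Or.inl ⟨k, l, hkl, hl, 1, Or.inl rfl, Or.inr (one_smul ℝ _).symm⟩

lemma inner_self_of_mem_DeltaE6 {v : EuclideanSpace ℝ (Fin 8)} (hv : v ∈ DeltaE6) :
    ⟪v, v⟫ = 2 := by
  rcases hv with ⟨k, l, hkl, -, s, hs, rfl | rfl⟩ | ⟨s, hs, ε, hε, -, rfl⟩
  · have hne : k ≠ l := fun h => by subst h; omega
    simp only [real_inner_smul_left, real_inner_smul_right, inner_sub_left, inner_sub_right,
      inner_eVec8, hne, hne.symm, if_true, if_false]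
    rcases hs with rfl | rfl <;> norm_num
  · have hne : k ≠ l := fun h => by subst h; omega
    simp only [real_inner_smul_left, real_inner_smul_right, inner_add_left, inner_add_right,
      inner_eVec8, hne, hne.symm, if_true, if_false]
    rcases hs with rfl | rfl <;> norm_num
  · have habs : ∀ x : ℝ, (x = 1 ∨ x = -1) → |x| = 1 := by
      rintro x (rfl | rfl) <;> norm_num
    simp only [PiLp.inner_apply, Fin.sum_univ_eight, Fin.sum_univ_five]
    simp [eVec8, habs s hs, habs _ (hε _)]
    norm_num

lemma eVec8_zero_sub_two_mem_span :
    eVec8 0 - eVec8 2 ∈ Submodule.span ℝ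
      {γ ∈ DeltaE6 | ⟪γ, eVec8 1 + eVec8 2⟫ ≠ 1 ∧ ⟪γ, eVec8 1 + eVec8 2⟫ ≠ -1} := by
  rw [show eVec8 0 - eVec8 2 = (1 / 2 : ℝ) • ((eVec8 0 + eVec8 3) + (eVec8 0 - eVec8 3) -
    (eVec8 1 + eVec8 2) + (eVec8 1 - eVec8 2)) by module]
  refine Submodule.smul_mem _ _ (add_mem (sub_mem (add_mem
    (Submodule.subset_span ⟨eVec8_add_mem_DeltaE6 (by decide) (by decide), ?_⟩)
    (Submodule.subset_span ⟨eVec8_sub_mem_DeltaE6 (by decide) (by decide), ?_⟩))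
    (Submodule.subset_span ⟨eVec8_add_mem_DeltaE6 (by decide) (by decide), ?_⟩))
    (Submodule.subset_span ⟨eVec8_sub_mem_DeltaE6 (by decide) (by decide), ?_⟩)) <;>
  simp only [inner_add_left, inner_sub_left, inner_add_right, inner_eVec8] <;>
  norm_num [Fin.ext_iff]

theorem stmt_7
    (N : EuclideanSpace ℝ (Fin 8) → EuclideanSpace ℝ (Fin 8) → ℝ)
    (hN : ∀ α ∈ DeltaE6, ∀ β ∈ DeltaE6, (N β α ≠ 0 ↔ β + α ∈ DeltaE6))
    (Γ : EuclideanSpace ℝ (Fin 8) → EuclideanSpace ℝ (Fin 8) → ℝ)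
    (hΓ : ∀ β α : EuclideanSpace ℝ (Fin 8),
      (β + α ∈ DeltaE6 → Γ β α = N β α) ∧ (β + α ∉ DeltaE6 → Γ β α = 0)) :
    ¬ ∃ F : EuclideanSpace ℝ (Fin 8) → EuclideanSpace ℝ (Fin 8),
        ∀ α ∈ DeltaE6, ∀ β ∈ DeltaE6, 2 * ⟪β, F α⟫ = Γ β α + Γ β (-α) := by
  have hβα : eVec8 0 - eVec8 2 + (eVec8 1 + eVec8 2) ∈ DeltaE6 := by
    rw [show eVec8 0 - eVec8 2 + (eVec8 1 + eVec8 2) = eVec8 0 + eVec8 1 by abel]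
    exact eVec8_add_mem_DeltaE6 (by decide) (by decide)
  exact not_exists_two_mul_inner_eq_of_mem_span (fun _ => inner_self_of_mem_DeltaE6) N hN Γ hΓ
    (eVec8_add_mem_DeltaE6 (by decide) (by decide))
    (eVec8_sub_mem_DeltaE6 (by decide) (by decide)) hβα eVec8_zero_sub_two_mem_span
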